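/- Let ν be a shift-invariant probability on ℝ^ℤ and μ the mixture measure constructed from the fiber kernel (point masses at continuity points, normalized Lebesgue measure on jump intervals). Then the one-dimensional marginal of μ at coordinate 0 is Lebesgue measure on (0,1): μ{y : y(0) ≤ t} = t for all 0 < t < 1. -/

import Mathlib

open MeasureTheory Set

/-!
Under `ν.bind κ` the coordinate `y 0` has law `∫ m s dρ(s)`, where `ρ` is the law of `ω 0`, so it
suffices that this mixture is uniform on `(0, 1)` (the randomized probability integral transform).
Fix `t ∈ (0, 1)` and `q = F⁻¹(t)`. Then `m s (-∞, t]` equals `1` for `s < q`, and vanishes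
`ρ`-a.e. on `s > q`, since `ρ` does not charge the flat stretches of `F` to the right of `q`.
At `s = q` the atom `ρ {q} = F q - F(q-)` is spread uniformly over the fiber
`[F(q-), F q] ∋ t`, which contributes `t - F(q-)`; adding `ρ (-∞, q) = F(q-)` gives `t`.
-/

open Filter Function

open scoped Topology in
theorem Monotone.leftLim_le_of_forall_lt {α β : Type*} [LinearOrder α] [TopologicalSpace α]
    [OrderTopology α] [ConditionallyCompleteLinearOrder β] [TopologicalSpace β] [OrderTopology β]
    {f : α → β} (hf : Monotone f) {b : α} [(𝓝[<] b).NeBot] {u : β} (h : ∀ x < b, f x ≤ u) :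
    leftLim f b ≤ u :=
  _root_.le_of_tendsto (hf.tendsto_leftLim b) (eventually_nhdsWithin_of_forall h)

namespace ProbabilityTheory

noncomputable def quantile (ρ : Measure ℝ) (u : ℝ) : ℝ := sInf {x | u ≤ cdf ρ x}

def quantileFiber (ρ : Measure ℝ) (s : ℝ) : Set ℝ := quantile ρ ⁻¹' {s} ∩ Ioo 0 1

noncomputable def fiberMeasure (ρ : Measure ℝ) (s : ℝ) : Measure ℝ :=
  if leftLim (cdf ρ) s < cdf ρ s then
    (volume (quantileFiber ρ s))⁻¹ • volume.restrict (quantileFiber ρ s)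
  else Measure.dirac (cdf ρ s)

variable {ρ : Measure ℝ} {s t u x : ℝ}

lemma leftLim_cdf_nonneg (ρ : Measure ℝ) (x : ℝ) : 0 ≤ leftLim (cdf ρ) x :=
  (cdf_nonneg ρ (x - 1)).trans ((monotone_cdf ρ).le_leftLim (sub_one_lt x))

lemma quantile_le_iff (hu0 : 0 < u) (hu1 : u < 1) : quantile ρ u ≤ x ↔ u ≤ cdf ρ x := by
  have hbdd : BddBelow {x | u ≤ cdf ρ x} := by
    obtain ⟨r, hr⟩ := ((tendsto_cdf_atBot ρ).eventually (eventually_lt_nhds hu0)).exists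
    exact ⟨r, fun x hx => le_of_not_gt fun hxr => (monotone_cdf ρ hxr.le |>.trans_lt hr).not_ge hx⟩
  have hne : {x | u ≤ cdf ρ x}.Nonempty := by
    obtain ⟨r, hr⟩ := ((tendsto_cdf_atTop ρ).eventually (eventually_gt_nhds hu1)).exists
    exact ⟨r, hr.le⟩
  refine ⟨fun h => le_trans ?_ (monotone_cdf ρ h), fun h => csInf_le hbdd h⟩
  -- right continuity of the cdf at the infimum
  rw [quantile, ← (cdf ρ).iInf_Ioi_eq]
  refine le_ciInf fun ⟨r, hr⟩ => ?_
  obtain ⟨y, hy, hyr⟩ := (csInf_lt_iff hbdd hne).1 hr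
  exact hy.trans (monotone_cdf ρ hyr.le)

lemma le_cdf_quantile (hu0 : 0 < u) (hu1 : u < 1) : u ≤ cdf ρ (quantile ρ u) :=
  (quantile_le_iff hu0 hu1).1 le_rfl

lemma cdf_lt_of_lt_quantile (hu0 : 0 < u) (hu1 : u < 1) (hx : x < quantile ρ u) :
    cdf ρ x < u :=
  lt_of_not_ge fun h => hx.not_ge ((quantile_le_iff hu0 hu1).2 h)

lemma leftLim_cdf_quantile_le (hu0 : 0 < u) (hu1 : u < 1) :
    leftLim (cdf ρ) (quantile ρ u) ≤ u :=
  (monotone_cdf ρ).leftLim_le_of_forall_lt fun _ hx => (cdf_lt_of_lt_quantile hu0 hu1 hx).le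

lemma quantileFiber_subset_Icc (s : ℝ) :
    quantileFiber ρ s ⊆ Icc (leftLim (cdf ρ) s) (cdf ρ s) := by
  rintro u ⟨rfl, hu0, hu1⟩
  exact ⟨leftLim_cdf_quantile_le hu0 hu1, le_cdf_quantile hu0 hu1⟩

lemma Ioo_subset_quantileFiber (s : ℝ) :
    Ioo (leftLim (cdf ρ) s) (cdf ρ s) ⊆ quantileFiber ρ s := by
  rintro u ⟨hLu, hus⟩
  have hu0 : 0 < u := (leftLim_cdf_nonneg ρ s).trans_lt hLu
  have hu1 : u < 1 := hus.trans_le (cdf_le_one ρ s)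
  refine ⟨le_antisymm ((quantile_le_iff hu0 hu1).2 hus.le) ?_, hu0, hu1⟩
  by_contra! h
  exact (le_cdf_quantile hu0 hu1).not_gt (((monotone_cdf ρ).le_leftLim h).trans_lt hLu)

lemma volume_Iic_inter_quantileFiber (s t : ℝ) :
    volume (Iic t ∩ quantileFiber ρ s) =
      ENNReal.ofReal (min t (cdf ρ s) - leftLim (cdf ρ) s) := by
  apply le_antisymm
  · calc volume (Iic t ∩ quantileFiber ρ s)
        ≤ volume (Icc (leftLim (cdf ρ) s) (min t (cdf ρ s))) := by
          refine measure_mono fun u ⟨hut, hu⟩ => ?_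
          obtain ⟨hLu, hus⟩ := quantileFiber_subset_Icc s hu
          exact ⟨hLu, le_min hut hus⟩
      _ = _ := Real.volume_Icc
  · calc ENNReal.ofReal (min t (cdf ρ s) - leftLim (cdf ρ) s)
        = volume (Ioo (leftLim (cdf ρ) s) (min t (cdf ρ s))) := Real.volume_Ioo.symm
      _ ≤ _ := by
          refine measure_mono fun u ⟨hLu, hu⟩ => ⟨(hu.trans_le (min_le_left _ _)).le, ?_⟩
          exact Ioo_subset_quantileFiber s ⟨hLu, hu.trans_le (min_le_right _ _)⟩

lemma volume_quantileFiber (s : ℝ) :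
    volume (quantileFiber ρ s) = ENNReal.ofReal (cdf ρ s - leftLim (cdf ρ) s) := by
  have h : quantileFiber ρ s ⊆ Iic (cdf ρ s) := fun u hu => (quantileFiber_subset_Icc s hu).2
  rw [← inter_eq_right.2 h, volume_Iic_inter_quantileFiber, min_self]

lemma fiberMeasure_Iic_of_leftLim_lt (h : leftLim (cdf ρ) s < cdf ρ s) (t : ℝ) :
    fiberMeasure ρ s (Iic t) = (ENNReal.ofReal (cdf ρ s - leftLim (cdf ρ) s))⁻¹ *
      ENNReal.ofReal (min t (cdf ρ s) - leftLim (cdf ρ) s) := by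
  rw [fiberMeasure, if_pos h, Measure.smul_apply, smul_eq_mul,
    Measure.restrict_apply measurableSet_Iic, volume_Iic_inter_quantileFiber,
    volume_quantileFiber]

lemma fiberMeasure_Iic_of_lt_quantile (ht0 : 0 < t) (ht1 : t < 1) (hs : s < quantile ρ t) :
    fiberMeasure ρ s (Iic t) = 1 := by
  have hst : cdf ρ s ≤ t := (cdf_lt_of_lt_quantile ht0 ht1 hs).le
  by_cases h : leftLim (cdf ρ) s < cdf ρ s
  · rw [fiberMeasure_Iic_of_leftLim_lt h, min_eq_right hst]
    exact ENNReal.inv_mul_cancel (ENNReal.ofReal_pos.2 (sub_pos.2 h)).ne' ENNReal.ofReal_ne_top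
  · rw [fiberMeasure, if_neg h, Measure.dirac_apply_of_mem (show cdf ρ s ∈ Iic t from hst)]

lemma fiberMeasure_Iic_of_quantile_lt (ht0 : 0 < t) (ht1 : t < 1) (hs : quantile ρ t < s)
    (hts : t < cdf ρ s) : fiberMeasure ρ s (Iic t) = 0 := by
  by_cases h : leftLim (cdf ρ) s < cdf ρ s
  · have htL : t ≤ leftLim (cdf ρ) s :=
      (le_cdf_quantile ht0 ht1).trans ((monotone_cdf ρ).le_leftLim hs)
    rw [fiberMeasure_Iic_of_leftLim_lt h, min_eq_left hts.le,
      ENNReal.ofReal_of_nonpos (sub_nonpos.2 htL), mul_zero]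
  · rw [fiberMeasure, if_neg h, Measure.dirac_apply' _ measurableSet_Iic,
      indicator_of_notMem (show cdf ρ s ∉ Iic t from not_le.2 hts)]

variable [IsProbabilityMeasure ρ]

lemma measure_singleton_eq_ofReal_cdf (x : ℝ) :
    ρ {x} = ENNReal.ofReal (cdf ρ x - leftLim (cdf ρ) x) := by
  have h := (cdf ρ).measure_singleton x
  rwa [measure_cdf] at h

lemma measure_Iio_eq_ofReal_leftLim_cdf (x : ℝ) :
    ρ (Iio x) = ENNReal.ofReal (leftLim (cdf ρ) x) := by
  have h := (cdf ρ).measure_Iio (tendsto_cdf_atBot ρ) x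
  rwa [measure_cdf, sub_zero] at h

lemma measure_setOf_cdf_le (u : ℝ) : ρ {x | cdf ρ x ≤ u} ≤ ENNReal.ofReal u := by
  set T := {x | cdf ρ x ≤ u}
  rcases le_or_gt 1 u with hu | hu
  · exact prob_le_one.trans (ENNReal.one_le_ofReal.2 hu)
  rcases T.eq_empty_or_nonempty with hT | hT
  · simp [hT]
  have hbdd : BddAbove T := by
    obtain ⟨r, hr⟩ :=
      ((tendsto_cdf_atTop ρ).eventually (eventually_gt_nhds hu)).exists_forall_of_atTop
    exact ⟨r, fun x hx => le_of_not_gt fun hrx => (hr x hrx.le).not_ge hx⟩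
  by_cases hb : sSup T ∈ T
  · calc ρ T ≤ ρ (Iic (sSup T)) := measure_mono fun x hx => le_csSup hbdd hx
      _ = ENNReal.ofReal (cdf ρ (sSup T)) := (ofReal_cdf ρ _).symm
      _ ≤ ENNReal.ofReal u := ENNReal.ofReal_le_ofReal hb
  · calc ρ T ≤ ρ (Iio (sSup T)) :=
          measure_mono fun x hx => (le_csSup hbdd hx).lt_of_ne fun h => hb (h ▸ hx)
      _ = ENNReal.ofReal (leftLim (cdf ρ) (sSup T)) := measure_Iio_eq_ofReal_leftLim_cdf _
      _ ≤ ENNReal.ofReal u := by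
          refine ENNReal.ofReal_le_ofReal ((monotone_cdf ρ).leftLim_le_of_forall_lt fun x hx => ?_)
          obtain ⟨y, hyT, hxy⟩ := exists_lt_of_lt_csSup hT hx
          exact (monotone_cdf ρ hxy.le).trans hyT

lemma measure_setOf_lt_and_cdf_le_cdf (q : ℝ) : ρ {x | q < x ∧ cdf ρ x ≤ cdf ρ q} = 0 := by
  set S := {x | q < x ∧ cdf ρ x ≤ cdf ρ q}
  have hS : MeasurableSet S :=
    measurableSet_Ioi.inter (measurableSet_le (monotone_cdf ρ).measurable measurable_const)
  have hsum : ρ (Iic q) + ρ S ≤ ρ (Iic q) + 0 := calc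
    ρ (Iic q) + ρ S = ρ (Iic q ∪ S) :=
        (measure_union (disjoint_left.2 fun x hx hxS => hxS.1.not_ge hx) hS).symm
    _ ≤ ρ {x | cdf ρ x ≤ cdf ρ q} :=
        measure_mono (union_subset (fun x hx => monotone_cdf ρ hx) fun x hx => hx.2)
    _ ≤ ENNReal.ofReal (cdf ρ q) := measure_setOf_cdf_le _
    _ = ρ (Iic q) + 0 := by rw [ofReal_cdf, add_zero]
  exact nonpos_iff_eq_zero.1 ((ENNReal.add_le_add_iff_left (measure_ne_top ρ _)).1 hsum)

lemma fiberMeasure_quantile_Iic_mul (ht0 : 0 < t) (ht1 : t < 1) :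
    fiberMeasure ρ (quantile ρ t) (Iic t) * ρ {quantile ρ t} =
      ENNReal.ofReal (t - leftLim (cdf ρ) (quantile ρ t)) := by
  set q := quantile ρ t
  have htq : t ≤ cdf ρ q := le_cdf_quantile ht0 ht1
  rw [measure_singleton_eq_ofReal_cdf]
  by_cases h : leftLim (cdf ρ) q < cdf ρ q
  · rw [fiberMeasure_Iic_of_leftLim_lt h, min_eq_left htq, mul_right_comm,
      ENNReal.inv_mul_cancel (ENNReal.ofReal_pos.2 (sub_pos.2 h)).ne' ENNReal.ofReal_ne_top,
      one_mul]
  · have hLq : leftLim (cdf ρ) q = cdf ρ q :=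
      le_antisymm ((monotone_cdf ρ).leftLim_le le_rfl) (not_lt.1 h)
    have htL : t = leftLim (cdf ρ) q := le_antisymm (hLq ▸ htq) (leftLim_cdf_quantile_le ht0 ht1)
    rw [← hLq, ← htL, sub_self, ENNReal.ofReal_zero, mul_zero]

lemma fiberMeasure_Iic_ae_eq (ht0 : 0 < t) (ht1 : t < 1) :
    (fun s => fiberMeasure ρ s (Iic t)) =ᵐ[ρ] fun s =>
      (Iio (quantile ρ t)).indicator 1 s +
        ({quantile ρ t} : Set ℝ).indicator (fun _ => fiberMeasure ρ (quantile ρ t) (Iic t)) s := by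
  set q := quantile ρ t
  have hflat : ∀ᵐ s ∂ρ, ¬(q < s ∧ cdf ρ s ≤ t) := by
    refine ae_iff.2 (measure_mono_null (fun s hs => ?_) (measure_setOf_lt_and_cdf_le_cdf q))
    obtain ⟨hqs, hst⟩ := not_not.1 hs
    exact ⟨hqs, hst.trans (le_cdf_quantile ht0 ht1)⟩
  filter_upwards [hflat] with s hs
  rcases lt_trichotomy s q with hsq | rfl | hqs
  · simp [hsq, hsq.ne, fiberMeasure_Iic_of_lt_quantile ht0 ht1 hsq]
  · simp
  · rw [fiberMeasure_Iic_of_quantile_lt ht0 ht1 hqs (not_le.1 fun h => hs ⟨hqs, h⟩)]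
    simp [hqs.not_gt, hqs.ne']

lemma aemeasurable_fiberMeasure_Iic (ht0 : 0 < t) (ht1 : t < 1) :
    AEMeasurable (fun s => fiberMeasure ρ s (Iic t)) ρ :=
  (((measurable_one.indicator measurableSet_Iio).add
    (measurable_const.indicator (measurableSet_singleton _))).aemeasurable).congr
    (fiberMeasure_Iic_ae_eq ht0 ht1).symm

lemma lintegral_fiberMeasure_Iic (ht0 : 0 < t) (ht1 : t < 1) :
    ∫⁻ s, fiberMeasure ρ s (Iic t) ∂ρ = ENNReal.ofReal t := by
  rw [lintegral_congr_ae (fiberMeasure_Iic_ae_eq ht0 ht1),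
    lintegral_add_left (measurable_one.indicator measurableSet_Iio),
    lintegral_indicator_one measurableSet_Iio,
    lintegral_indicator_const (measurableSet_singleton _),
    fiberMeasure_quantile_Iic_mul ht0 ht1, measure_Iio_eq_ofReal_leftLim_cdf,
    ← ENNReal.ofReal_add (leftLim_cdf_nonneg ρ _)
      (sub_nonneg.2 (leftLim_cdf_quantile_le ht0 ht1)), add_sub_cancel]

end ProbabilityTheory

open ProbabilityTheory in
theorem mixture_marginal_is_uniform_general
    (ν : Measure (ℤ → ℝ)) [IsProbabilityMeasure ν]
    (F : ℝ → ℝ) (hF : ∀ t, F t = ((ν.map (fun x => x 0)) (Set.Iic t)).toReal)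
    (Finv : ℝ → ℝ) (hFinv : ∀ s, Finv s = sInf {t : ℝ | s ≤ F t})
    (m : ℝ → Measure ℝ)
    (hmjump : ∀ s : ℝ, sSup (F '' Set.Iio s) < F s →
      m s = (volume (Finv ⁻¹' {s} ∩ Set.Ioo (0:ℝ) 1))⁻¹ •
        volume.restrict (Finv ⁻¹' {s} ∩ Set.Ioo (0:ℝ) 1))
    (hmcont : ∀ s : ℝ, ¬ sSup (F '' Set.Iio s) < F s → m s = Measure.dirac (F s))
    (κ : (ℤ → ℝ) → Measure (ℤ → ℝ))
    (hmeas : ∀ s : Set (ℤ → ℝ), MeasurableSet s → Measurable (fun ω => κ ω s))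
    (hmarg : ∀ ω, (κ ω).map (fun y => y 0) = m (ω 0)) :
    ∀ t ∈ Set.Ioo (0 : ℝ) 1,
      (ν.bind κ) {y : ℤ → ℝ | y 0 ≤ t} = ENNReal.ofReal t := by
  rintro t ⟨ht0, ht1⟩
  have hev : Measurable fun x : ℤ → ℝ => x 0 := measurable_pi_apply 0
  have : IsProbabilityMeasure (ν.map fun x => x 0) :=
    Measure.isProbabilityMeasure_map hev.aemeasurable
  obtain rfl : F = cdf (ν.map fun x => x 0) :=
    funext fun x => by rw [hF, cdf_eq_real, measureReal_def]
  obtain rfl : Finv = quantile (ν.map fun x => x 0) := funext hFinv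
  obtain rfl : m = fiberMeasure (ν.map fun x => x 0) := funext fun s => by
    have hL (s : ℝ) : sSup (cdf (ν.map fun x => x 0) '' Iio s) = leftLim (cdf _) s :=
      (monotone_cdf _).leftLim_eq_sSup.symm
    simp only [hL] at hmjump hmcont
    unfold fiberMeasure
    split_ifs with h
    exacts [hmjump s h, hmcont s h]
  rw [Measure.bind_apply (measurableSet_le hev measurable_const)
    (Measure.measurable_of_measurable_coe κ hmeas).aemeasurable]
  calc ∫⁻ ω, κ ω {y | y 0 ≤ t} ∂ν = ∫⁻ ω, fiberMeasure _ (ω 0) (Iic t) ∂ν :=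
        lintegral_congr fun ω => by rw [← hmarg ω, Measure.map_apply hev measurableSet_Iic]; rfl
    _ = ∫⁻ s, fiberMeasure _ s (Iic t) ∂(ν.map fun x => x 0) :=
        (lintegral_map' (aemeasurable_fiberMeasure_Iic ht0 ht1) hev.aemeasurable).symm
    _ = ENNReal.ofReal t := lintegral_fiberMeasure_Iic ht0 ht1

/-- The mixture measure built from the fiber kernel (point mass `δ_{F(s)}` at
continuity points `s`, normalized Lebesgue measure on the jump interval
`A_s = {u ∈ (0,1) | F⁻¹(u) = s}` at jump points) has uniform one-dimensional marginal
at coordinate `0`: `μ {y | y 0 ≤ t} = t` for all `0 < t < 1`. -/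
theorem mixture_marginal_is_uniform
    (ν : Measure (ℤ → ℝ)) [IsProbabilityMeasure ν]
    (hinv : ν.map (fun x => fun n : ℤ => x (n + 1)) = ν)
    (F : ℝ → ℝ) (hF : ∀ t, F t = ((ν.map (fun x => x 0)) (Set.Iic t)).toReal)
    (Finv : ℝ → ℝ) (hFinv : ∀ s, Finv s = sInf {t : ℝ | s ≤ F t})
    (m : ℝ → Measure ℝ)
    (hmjump : ∀ s : ℝ, sSup (F '' Set.Iio s) < F s →
      m s = (volume (Finv ⁻¹' {s} ∩ Set.Ioo (0:ℝ) 1))⁻¹ •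
        volume.restrict (Finv ⁻¹' {s} ∩ Set.Ioo (0:ℝ) 1))
    (hmcont : ∀ s : ℝ, ¬ sSup (F '' Set.Iio s) < F s → m s = Measure.dirac (F s))
    (κ : (ℤ → ℝ) → Measure (ℤ → ℝ))
    (hprob : ∀ ω, IsProbabilityMeasure (κ ω))
    (hmeas : ∀ s : Set (ℤ → ℝ), MeasurableSet s → Measurable (fun ω => κ ω s))
    (hmarg : ∀ ω, (κ ω).map (fun y => y 0) = m (ω 0)) :
    ∀ t ∈ Set.Ioo (0 : ℝ) 1,
      (ν.bind κ) {y : ℤ → ℝ | y 0 ≤ t} = ENNReal.ofReal t :=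
  mixture_marginal_is_uniform_general ν F hF Finv hFinv m hmjump hmcont κ hmeas hmarg
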